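/- For every type τ ∈ 𝕋_C, the type ⋂ℙ(τ) is organized and ⋂ℙ(τ) = τ (equality meaning mutual subtyping). -/
import Mathlib


/-- Intersection types with constructors `𝕋_C`: constants, type variables, `ω`,
arrows, intersections and unary constructors (constructor names in `ℕ`). -/
inductive TyC where
  | const : Nat → TyC
  | tvar : Nat → TyC
  | omega : TyC
  | arrow : TyC → TyC → TyC
  | inter : TyC → TyC → TyC
  | ctor : Nat → TyC → TyC
deriving DecidableEq

/-- Subtyping on `𝕋_C`: the least preorder with the BCD axioms together with
covariance of constructors and distribution of constructors over intersection. -/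
inductive SubC : TyC → TyC → Prop where
  | refl (σ : TyC) : SubC σ σ
  | trans {σ τ υ : TyC} : SubC σ τ → SubC τ υ → SubC σ υ
  | le_omega (σ : TyC) : SubC σ .omega
  | omega_arrow : SubC .omega (.arrow .omega .omega)
  | inter_left (σ τ : TyC) : SubC (.inter σ τ) σ
  | inter_right (σ τ : TyC) : SubC (.inter σ τ) τ
  | le_inter {σ τ₁ τ₂ : TyC} : SubC σ τ₁ → SubC σ τ₂ → SubC σ (.inter τ₁ τ₂)
  | arrow_inter (σ τ₁ τ₂ : TyC) :
      SubC (.inter (.arrow σ τ₁) (.arrow σ τ₂)) (.arrow σ (.inter τ₁ τ₂))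
  | arrow_mono {σ₁ σ₂ τ₁ τ₂ : TyC} : SubC σ₂ σ₁ → SubC τ₁ τ₂ →
      SubC (.arrow σ₁ τ₁) (.arrow σ₂ τ₂)
  | ctor_mono {τ₁ τ₂ : TyC} (c : Nat) : SubC τ₁ τ₂ → SubC (.ctor c τ₁) (.ctor c τ₂)
  | ctor_inter (c : Nat) (τ₁ τ₂ : TyC) :
      SubC (.inter (.ctor c τ₁) (.ctor c τ₂)) (.ctor c (.inter τ₁ τ₂))

/-- Type equality on `𝕋_C`: mutual subtyping. -/
def TyCEq (σ τ : TyC) : Prop := SubC σ τ ∧ SubC τ σ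

/-- Finite intersection of a list of `𝕋_C` types (`ω` for the empty list). -/
def interListC : List TyC → TyC
  | [] => .omega
  | [π] => π
  | π :: π' :: rest => .inter π (interListC (π' :: rest))
/-- Paths in `𝕋_C`: `π ::= a | α | σ→π | c(ω) | c(π)`. -/
inductive IsPath : TyC → Prop where
  | const (a : Nat) : IsPath (.const a)
  | tvar (a : Nat) : IsPath (.tvar a)
  | arrow (σ : TyC) {π : TyC} : IsPath π → IsPath (.arrow σ π)
  | ctor_omega (c : Nat) : IsPath (.ctor c .omega)
  | ctor (c : Nat) {π : TyC} : IsPath π → IsPath (.ctor c π)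

/-- The set `ℙ(τ)` of paths in `τ` (as a list). -/
def pathsC : TyC → List TyC
  | .const a => [.const a]
  | .tvar a => [.tvar a]
  | .omega => []
  | .arrow σ τ => (pathsC τ).map (.arrow σ)
  | .inter σ τ => pathsC σ ++ pathsC τ
  | .ctor c τ =>
      let ps := pathsC τ
      if ps.isEmpty then [.ctor c .omega] else ps.map (.ctor c)

/-- A type is organized if it is an intersection of paths (with `ω` for the
empty intersection). -/
def Organized (τ : TyC) : Prop :=
  ∃ ps : List TyC, (∀ π ∈ ps, IsPath π) ∧ τ = interListC ps

lemma interListC_cons_le_inter (π : TyC) (l : List TyC) :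
    SubC (interListC (π :: l)) (.inter π (interListC l)) := by
  cases l with
  | nil => exact .le_inter (.refl _) (.le_omega _)
  | cons b t => exact .refl _

lemma inter_le_interListC_cons (π : TyC) (l : List TyC) :
    SubC (.inter π (interListC l)) (interListC (π :: l)) := by
  cases l with
  | nil => exact .inter_left _ _
  | cons b t => exact .refl _

lemma le_interListC {σ : TyC} {l : List TyC} (h : ∀ π ∈ l, SubC σ π) :
    SubC σ (interListC l) := by
  induction l with
  | nil => exact .le_omega _
  | cons a t ih =>
      exact .trans (.le_inter (h a (by simp)) (ih fun π hπ => h π (by simp [hπ])))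
        (inter_le_interListC_cons a t)

lemma interListC_le_of_mem {l : List TyC} {π : TyC} (h : π ∈ l) :
    SubC (interListC l) π := by
  induction l with
  | nil => simp at h
  | cons a t ih =>
      rcases List.mem_cons.mp h with rfl | h
      · exact .trans (interListC_cons_le_inter _ _) (.inter_left _ _)
      · exact .trans (.trans (interListC_cons_le_inter _ _) (.inter_right _ _)) (ih h)

lemma pathsC_isPath : ∀ (τ : TyC), ∀ π ∈ pathsC τ, IsPath π := by
  intro τ
  induction τ with
  | const a => intro π h; simp [pathsC] at h; subst h; exact .const a
  | tvar a => intro π h; simp [pathsC] at h; subst h; exact .tvar a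
  | omega => intro π h; simp [pathsC] at h
  | arrow σ τ ih1 ih2 =>
      intro π h
      simp [pathsC] at h
      obtain ⟨p, hp, rfl⟩ := h
      exact .arrow σ (ih2 p hp)
  | inter σ τ ih1 ih2 =>
      intro π h
      simp [pathsC] at h
      rcases h with h | h
      · exact ih1 π h
      · exact ih2 π h
  | ctor c τ ih =>
      intro π h
      simp only [pathsC] at h
      split at h
      · simp at h; subst h; exact .ctor_omega c
      · simp at h; obtain ⟨p, hp, rfl⟩ := h; exact .ctor c (ih p hp)

lemma map_arrow_le (σ : TyC) (l : List TyC) :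
    SubC (interListC (l.map (.arrow σ))) (.arrow σ (interListC l)) := by
  induction l with
  | nil => exact .trans .omega_arrow (.arrow_mono (.le_omega σ) (.refl _))
  | cons a t ih =>
      refine .trans (interListC_cons_le_inter _ _) ?_
      refine .trans (.le_inter (.inter_left _ _) (.trans (.inter_right _ _) ih)) ?_
      exact .trans (.arrow_inter σ a (interListC t))
        (.arrow_mono (.refl _) (inter_le_interListC_cons a t))

lemma map_ctor_le (c : Nat) (π : TyC) (l : List TyC) :
    SubC (interListC ((π :: l).map (.ctor c))) (.ctor c (interListC (π :: l))) := by
  induction l generalizing π with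
  | nil => exact .refl _
  | cons b t ih =>
      refine .trans (interListC_cons_le_inter _ _) ?_
      refine .trans (.le_inter (.inter_left _ _) (.trans (.inter_right _ _) (ih b))) ?_
      exact .trans (.ctor_inter c π (interListC (b :: t)))
        (.ctor_mono c (inter_le_interListC_cons π (b :: t)))

lemma paths_eq (τ : TyC) : TyCEq (interListC (pathsC τ)) τ := by
  induction τ with
  | const a => exact ⟨.refl _, .refl _⟩
  | tvar a => exact ⟨.refl _, .refl _⟩
  | omega => exact ⟨.refl _, .refl _⟩
  | arrow σ τ ih1 ih2 =>
      constructor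
      · exact .trans (map_arrow_le σ (pathsC τ)) (.arrow_mono (.refl _) ih2.1)
      · refine le_interListC ?_
        intro π h
        simp [pathsC] at h
        obtain ⟨p, hp, rfl⟩ := h
        exact .arrow_mono (.refl _) (.trans ih2.2 (interListC_le_of_mem hp))
  | inter σ τ ih1 ih2 =>
      constructor
      · refine .le_inter (.trans (le_interListC ?_) ih1.1) (.trans (le_interListC ?_) ih2.1)
        · intro π h; exact interListC_le_of_mem (by simp [pathsC, h])
        · intro π h; exact interListC_le_of_mem (by simp [pathsC, h])
      · refine le_interListC ?_
        intro π h
        simp [pathsC] at h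
        rcases h with h | h
        · exact .trans (.inter_left _ _) (.trans ih1.2 (interListC_le_of_mem h))
        · exact .trans (.inter_right _ _) (.trans ih2.2 (interListC_le_of_mem h))
  | ctor c τ ih =>
      by_cases hemp : (pathsC τ).isEmpty
      · have hnil : pathsC τ = [] := List.isEmpty_iff.mp hemp
        have : pathsC (.ctor c τ) = [.ctor c .omega] := by simp [pathsC, hnil]
        rw [hnil] at ih
        rw [this]
        exact ⟨.ctor_mono c ih.1, .ctor_mono c ih.2⟩
      · obtain ⟨π, l, hl⟩ : ∃ π l, pathsC τ = π :: l := by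
          cases h : pathsC τ with
          | nil => simp [h] at hemp
          | cons a t => exact ⟨a, t, rfl⟩
        have : pathsC (.ctor c τ) = (pathsC τ).map (.ctor c) := by
          simp [pathsC, hemp]
        rw [this]
        constructor
        · rw [hl]
          exact .trans (map_ctor_le c π l) (.ctor_mono c (hl ▸ ih.1))
        · refine le_interListC ?_
          intro p hp
          simp at hp
          obtain ⟨q, hq, rfl⟩ := hp
          exact .ctor_mono c (.trans ih.2 (interListC_le_of_mem hq))

/-- `⋂ℙ(τ)` is organized and equal to `τ` (mutual subtyping). -/
theorem paths_organized_eq (τ : TyC) :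
    Organized (interListC (pathsC τ)) ∧ TyCEq (interListC (pathsC τ)) τ := by
  refine ⟨⟨pathsC τ, pathsC_isPath τ, rfl⟩, paths_eq τ⟩
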